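/- Let n and n₁ be positive integers with n − n₁ ≥ 31 and 3n₁ ≥ n + 3. Then for every integer m with C(n₁, 2) − 2(n − n₁) ≤ m ≤ C(n₁, 2), where C(n₁, 2) = n₁(n₁ − 1)/2, there exists a partition p of n whose largest part equals n₁ such that λ(p) = m. -/

import Mathlib

/-- `λ(p) = (1/2)·Σ_{j=1}^k n_j·(n_j − 2j + 1)` for a finite sequence of naturals. -/
def transLam (L : List ℕ) : ℚ :=
  (∑ j ∈ Finset.range L.length,
    (L.getD j 0 : ℚ) * ((L.getD j 0 : ℚ) - 2 * ((j : ℚ) + 1) + 1)) / 2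

/-- A partition of `n`: a nonincreasing list of positive integers summing to `n`. -/
def IsPartitionOf (n : ℕ) (L : List ℕ) : Prop :=
  L.Pairwise (· ≥ ·) ∧ (∀ x ∈ L, 0 < x) ∧ L.sum = n

/-
`transLam L` is the content sum of the Young diagram of `L`. Deleting the first row `n₁` of `p`
leaves a partition `q` of `r = n - n₁`, and `λ(p) = C(n₁, 2) - r + λ(q)`; so it suffices to realise
every `w` with `|w| ≤ r` as the content sum of a partition of `r` with all parts at most `n₁`. In
Frobenius coordinates `(aᵢ, bᵢ)` the content sum is `Σ (aᵢ - bᵢ)(aᵢ + bᵢ + 1) / 2`, and swapping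
arms and legs negates it, so one may take `w ≥ 0`. For `r ≥ 31` partitions of Frobenius rank at
most three, with arms and legs at most `r / 2 + 1`, suffice; they are found by a case analysis on
the parities and the sizes of `r` and `w`.
-/

lemma sum_range_getD (L : List ℕ) :
    ∑ j ∈ Finset.range L.length, (L.getD j 0 : ℚ) = L.sum := by
  induction L with
  | nil => simp
  | cons a L ih =>
    rw [List.length_cons, Finset.sum_range_succ']
    simp only [List.getD_cons_succ, List.getD_cons_zero, ih, List.sum_cons]
    push_cast; ring

lemma transLam_cons (x : ℕ) (L : List ℕ) :
    transLam (x :: L) = (x : ℚ) * (x - 1) / 2 + transLam L - L.sum := by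
  have shift (j : ℕ) : (L.getD j 0 : ℚ) * (L.getD j 0 - 2 * ((j + 1 : ℕ) + 1) + 1) =
      L.getD j 0 * (L.getD j 0 - 2 * (j + 1) + 1) - 2 * L.getD j 0 := by
    push_cast; ring
  unfold transLam
  rw [List.length_cons, Finset.sum_range_succ', ← sum_range_getD]
  simp only [List.getD_cons_succ, List.getD_cons_zero, shift, Finset.sum_sub_distrib,
    ← Finset.mul_sum]
  push_cast; ring

lemma transLam_append (L M : List ℕ) :
    transLam (L ++ M) = transLam L + transLam M - L.length * M.sum := by
  induction L with
  | nil => simp [transLam]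
  | cons x L ih =>
    rw [List.cons_append, transLam_cons, transLam_cons, ih]
    simp only [List.sum_append, List.length_cons]
    push_cast; ring

lemma transLam_replicate_one (k : ℕ) : transLam (List.replicate k 1) = -(k * (k - 1) / 2 : ℚ) := by
  induction k with
  | zero => simp [transLam]
  | succ k ih =>
    rw [List.replicate_succ, transLam_cons, ih]
    simp only [List.sum_replicate, smul_eq_mul, mul_one]
    push_cast; ring

lemma transLam_map_succ (L : List ℕ) :
    transLam (L.map (· + 1)) = transLam L + L.sum - L.length * (L.length - 1) / 2 := by
  induction L with
  | nil => simp [transLam]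
  | cons x L ih =>
    rw [List.map_cons, transLam_cons, transLam_cons, ih]
    simp only [List.sum_map_add, List.map_const', List.sum_replicate, List.map_id',
      List.length_cons, smul_eq_mul, mul_one, List.sum_cons]
    push_cast; ring

/-- Surround the diagram of `P` by a hook with arm `a` and leg `b`; this prepends the Frobenius
coordinate `(a, b)` when `P` has at most `b` rows and parts at most `a`. -/
def addHook (a b : ℕ) (P : List ℕ) : List ℕ :=
  (a + 1) :: (P.map (· + 1) ++ List.replicate (b - P.length) 1)

section addHook

variable {a b : ℕ} {P : List ℕ}

lemma length_addHook (hb : P.length ≤ b) : (addHook a b P).length = b + 1 := by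
  simp only [addHook, List.length_cons, List.length_append, List.length_map,
    List.length_replicate]
  omega

lemma le_of_mem_addHook (ha : ∀ x ∈ P, x ≤ a) : ∀ x ∈ addHook a b P, x ≤ a + 1 := by
  simp only [addHook, List.mem_cons, List.mem_append, List.mem_map, List.mem_replicate]
  rintro x (rfl | ⟨y, hy, rfl⟩ | ⟨-, rfl⟩)
  · rfl
  · exact Nat.succ_le_succ (ha y hy)
  · omega

lemma isPartitionOf_addHook {r : ℕ} (hP : IsPartitionOf r P) (ha : ∀ x ∈ P, x ≤ a)
    (hb : P.length ≤ b) : IsPartitionOf (r + (a + b + 1)) (addHook a b P) := by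
  obtain ⟨hsorted, -, hsum⟩ := hP
  refine ⟨List.pairwise_cons.2 ⟨?_, List.pairwise_append.2 ⟨?_, ?_, ?_⟩⟩, ?_, ?_⟩
  · intro x hx
    exact le_of_mem_addHook ha x (List.mem_cons_of_mem _ hx)
  · exact List.Pairwise.map _ (fun x y h => Nat.succ_le_succ h) hsorted
  · exact List.pairwise_replicate.2 (Or.inr le_rfl)
  · simp only [List.mem_map, List.mem_replicate]
    rintro _ ⟨y, -, rfl⟩ _ ⟨-, rfl⟩
    omega
  · simp only [addHook, List.mem_cons, List.mem_append, List.mem_map, List.mem_replicate]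
    rintro x (rfl | ⟨y, -, rfl⟩ | ⟨-, rfl⟩) <;> omega
  · simp only [addHook, List.sum_cons, List.sum_append, List.sum_map_add, List.map_id_fun', id_eq,
      hsum, List.map_const', List.sum_replicate, smul_eq_mul, mul_one]
    omega

lemma transLam_addHook (hb : P.length ≤ b) :
    transLam (addHook a b P) = transLam P + ((a : ℚ) - b) * (a + b + 1) / 2 := by
  obtain ⟨k, rfl⟩ : ∃ k, b = P.length + k := ⟨b - P.length, by omega⟩
  rw [addHook, transLam_cons, transLam_append, transLam_map_succ, transLam_replicate_one]
  simp only [Nat.cast_add, Nat.cast_one, add_sub_cancel_right, Nat.cast_list_sum,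
    add_tsub_cancel_left, List.length_map, List.sum_replicate, smul_eq_mul, mul_one,
    List.sum_append, List.sum_map_add, List.map_id_fun', id_eq, List.map_const']
  ring

end addHook

/-- The partition with Frobenius coordinates `F = [(a₁, b₁), (a₂, b₂), …]`, arms `aᵢ` and
legs `bᵢ`. -/
def ofFrobenius : List (ℕ × ℕ) → List ℕ
  | [] => []
  | (a, b) :: F => addHook a b (ofFrobenius F)

def hookLength (p : ℕ × ℕ) : ℕ := p.1 + p.2 + 1

def twiceHookContent (p : ℕ × ℕ) : ℤ := ((p.1 : ℤ) - p.2) * (p.1 + p.2 + 1)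

def IsFrobenius (F : List (ℕ × ℕ)) : Prop := F.Pairwise fun p q => q.1 < p.1 ∧ q.2 < p.2

section ofFrobenius

variable {F : List (ℕ × ℕ)}

lemma length_ofFrobenius_le (hF : IsFrobenius F) {b : ℕ} (hb : ∀ p ∈ F, p.2 < b) :
    (ofFrobenius F).length ≤ b := by
  induction F generalizing b with
  | nil => simp [ofFrobenius]
  | cons p F ih =>
    obtain ⟨hp, hF⟩ := List.pairwise_cons.1 hF
    rw [ofFrobenius, length_addHook (ih hF fun q hq => (hp q hq).2)]
    exact hb p List.mem_cons_self

lemma le_of_mem_ofFrobenius (hF : IsFrobenius F) {a : ℕ} (ha : ∀ p ∈ F, p.1 < a) :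
    ∀ x ∈ ofFrobenius F, x ≤ a := by
  induction F generalizing a with
  | nil => simp [ofFrobenius]
  | cons p F ih =>
    obtain ⟨hp, hF⟩ := List.pairwise_cons.1 hF
    intro x hx
    exact (le_of_mem_addHook (ih hF fun q hq => (hp q hq).1) x hx).trans
      (ha p List.mem_cons_self)

lemma isPartitionOf_ofFrobenius (hF : IsFrobenius F) :
    IsPartitionOf (F.map hookLength).sum (ofFrobenius F) := by
  induction F with
  | nil => simp [ofFrobenius, IsPartitionOf]
  | cons p F ih =>
    obtain ⟨hp, hF⟩ := List.pairwise_cons.1 hF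
    rw [List.map_cons, List.sum_cons, add_comm]
    exact isPartitionOf_addHook (ih hF) (le_of_mem_ofFrobenius hF fun q hq => (hp q hq).1)
      (length_ofFrobenius_le hF fun q hq => (hp q hq).2)

lemma two_mul_transLam_ofFrobenius (hF : IsFrobenius F) :
    2 * transLam (ofFrobenius F) = (F.map twiceHookContent).sum := by
  induction F with
  | nil => simp [ofFrobenius, transLam]
  | cons p F ih =>
    obtain ⟨hp, hF⟩ := List.pairwise_cons.1 hF
    rw [ofFrobenius, transLam_addHook (length_ofFrobenius_le hF fun q hq => (hp q hq).2),
      List.map_cons, List.sum_cons, Int.cast_add, ← ih hF, twiceHookContent]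
    push_cast; ring

end ofFrobenius

/-- The bound on arms and legs gives the partition and its conjugate parts at most `n₁` whenever
`r + 3 ≤ 2 * n₁`. -/
structure ContentWitness (r : ℕ) (w : ℤ) (F : List (ℕ × ℕ)) : Prop where
  isFrobenius : IsFrobenius F
  sum_hookLength : (F.map hookLength).sum = r
  sum_twiceHookContent : (F.map twiceHookContent).sum = 2 * w
  two_mul_le : ∀ p ∈ F, 2 * p.1 ≤ r + 2 ∧ 2 * p.2 ≤ r + 2

namespace ContentWitness

variable {r : ℕ} {w : ℤ}

lemma swap {F : List (ℕ × ℕ)} (h : ContentWitness r w F) :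
    ContentWitness r (-w) (F.map Prod.swap) where
  isFrobenius := List.pairwise_map.2 (h.isFrobenius.imp And.symm)
  sum_hookLength := by
    rw [← h.sum_hookLength, List.map_map]
    congr 1
    exact List.map_congr_left fun p _ => by simp [hookLength, add_comm]
  sum_twiceHookContent := by
    rw [mul_neg, ← h.sum_twiceHookContent, List.sum_neg, List.map_map, List.map_map]
    congr 1
    exact List.map_congr_left fun p _ => by
      simp only [Function.comp_apply, twiceHookContent, Prod.fst_swap, Prod.snd_swap]
      ring
  two_mul_le := by
    simp only [List.mem_map, Prod.exists, Prod.swap_prod_mk]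
    rintro _ ⟨a, b, hab, rfl⟩
    exact (h.two_mul_le _ hab).symm

lemma single {a b : ℕ} (h : a + b + 1 = r ∧ 2 * a ≤ r + 2 ∧ 2 * b ≤ r + 2)
    (hw : ((a : ℤ) - b) * (a + b + 1) = 2 * w) : ContentWitness r w [(a, b)] where
  isFrobenius := List.pairwise_singleton _ _
  sum_hookLength := by simp [hookLength, h.1]
  sum_twiceHookContent := by simpa [twiceHookContent] using hw
  two_mul_le := by simpa using h.2

lemma pair {a₁ b₁ a₂ b₂ : ℕ}
    (h : a₂ < a₁ ∧ b₂ < b₁ ∧ a₁ + b₁ + a₂ + b₂ + 2 = r ∧ 2 * a₁ ≤ r + 2 ∧ 2 * b₁ ≤ r + 2)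
    (hw : ((a₁ : ℤ) - b₁) * (a₁ + b₁ + 1) + ((a₂ : ℤ) - b₂) * (a₂ + b₂ + 1) = 2 * w) :
    ContentWitness r w [(a₁, b₁), (a₂, b₂)] where
  isFrobenius := List.pairwise_pair.2 ⟨h.1, h.2.1⟩
  sum_hookLength := by
    simp only [List.map_cons, List.map_nil, List.sum_cons, List.sum_nil, hookLength]
    omega
  sum_twiceHookContent := by simpa [twiceHookContent] using hw
  two_mul_le := by
    simp only [List.mem_cons, List.not_mem_nil, or_false, forall_eq_or_imp, forall_eq]
    omega

lemma triple {a₁ b₁ a₂ b₂ a₃ b₃ : ℕ}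
    (h : a₂ < a₁ ∧ b₂ < b₁ ∧ a₃ < a₂ ∧ b₃ < b₂ ∧ a₁ + b₁ + a₂ + b₂ + a₃ + b₃ + 3 = r ∧
      2 * a₁ ≤ r + 2 ∧ 2 * b₁ ≤ r + 2)
    (hw : ((a₁ : ℤ) - b₁) * (a₁ + b₁ + 1) + ((a₂ : ℤ) - b₂) * (a₂ + b₂ + 1) +
      ((a₃ : ℤ) - b₃) * (a₃ + b₃ + 1) = 2 * w) :
    ContentWitness r w [(a₁, b₁), (a₂, b₂), (a₃, b₃)] where
  isFrobenius := by
    simp only [IsFrobenius, List.pairwise_cons, List.mem_cons, List.not_mem_nil, or_false,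
      forall_eq_or_imp, forall_eq, IsEmpty.forall_iff, implies_true, List.Pairwise.nil,
      and_self, and_true]
    omega
  sum_hookLength := by
    simp only [List.map_cons, List.map_nil, List.sum_cons, List.sum_nil, hookLength]
    omega
  sum_twiceHookContent := by simpa [twiceHookContent, add_assoc] using hw
  two_mul_le := by
    simp only [List.mem_cons, List.not_mem_nil, or_false, forall_eq_or_imp, forall_eq]
    omega

end ContentWitness

section Cover

open ContentWitness

lemma exists_contentWitness_odd_of_le {s w : ℕ} (hs : 12 ≤ s) (hw : w ≤ s) :
    ∃ F, ContentWitness (2 * s + 1) w F := by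
  by_cases h0 : w = 0
  · exact ⟨[(s, s)], single (by omega) (by push_cast [h0]; ring)⟩
  by_cases h1 : w = 1
  · obtain ⟨t, rfl⟩ : ∃ t, s = t + 1 := ⟨s - 1, by omega⟩
    exact ⟨[(t, t), (1, 0)], pair (by omega) (by push_cast [h1]; ring)⟩
  by_cases hsmall : 2 * w ≤ s + 1
  · rcases Nat.even_or_odd (s + w) with ⟨t, ht⟩ | ⟨t, ht⟩
    · obtain ⟨u, hu⟩ : ∃ u, s + w = 2 * u + 2 := ⟨t - 1, by omega⟩
      obtain ⟨g, rfl⟩ : ∃ g, s = w + 2 * g + 2 := ⟨(s - w - 2) / 2, by omega⟩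
      exact ⟨[(u + 1, u), (g, g + 1), (0, 0)], triple (by omega) (by push_cast; ring_nf; omega)⟩
    · obtain ⟨u, hu⟩ : ∃ u, s + w = 2 * u + 3 := ⟨t - 1, by omega⟩
      obtain ⟨g, rfl⟩ : ∃ g, s = w + 2 * g + 3 := ⟨(s - w - 3) / 2, by omega⟩
      exact ⟨[(u + 1, u), (g, g + 1), (1, 1)], triple (by omega) (by push_cast; ring_nf; omega)⟩
  · obtain ⟨v, rfl⟩ : ∃ v, w = v + 1 := ⟨w - 1, by omega⟩
    obtain ⟨g, rfl⟩ : ∃ g, s = v + 1 + g := ⟨s - v - 1, by omega⟩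
    exact ⟨[(v + 1, v), (g, g)], pair (by omega) (by push_cast; ring)⟩

lemma exists_contentWitness_odd_of_lt {s w : ℕ} (hs : 12 ≤ s) (hsw : s < w)
    (hw : w ≤ 2 * s + 1) : ∃ F, ContentWitness (2 * s + 1) w F := by
  by_cases htop : w = 2 * s + 1
  · obtain ⟨t, rfl⟩ : ∃ t, s = t + 1 := ⟨s - 1, by omega⟩
    exact ⟨[(t + 2, t)], single (by omega) (by push_cast [htop]; ring)⟩
  by_cases hmid : w = s + 1
  · obtain ⟨g, rfl⟩ : ∃ g, s = g + 7 := ⟨s - 7, by omega⟩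
    exact ⟨[(g + 1, g), (5, 3), (1, 2)], triple (by omega) (by push_cast [hmid]; ring)⟩
  obtain ⟨v, hv⟩ : ∃ v, 2 * s = w + v := ⟨2 * s - w, by omega⟩
  obtain ⟨g, hg⟩ : ∃ g, w = s + g + 2 := ⟨w - s - 2, by omega⟩
  by_cases hlow : 2 * w ≤ 3 * s
  · exact ⟨[(v + 1, v), (g + 2, g)], pair (by omega) (by push_cast; ring_nf; omega)⟩
  by_cases hhigh : 3 * s + 2 < 2 * w
  · exact ⟨[(g + 2, g), (v + 1, v)], pair (by omega) (by push_cast; ring_nf; omega)⟩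
  rcases Nat.even_or_odd w with ⟨t, ht⟩ | ⟨t, ht⟩
  · rcases Nat.even_or_odd s with ⟨t', ht'⟩ | ⟨t', ht'⟩
    · obtain ⟨u, hu⟩ : ∃ u, 3 * s = w + 2 * u + 2 := ⟨(3 * s - w - 2) / 2, by omega⟩
      obtain ⟨g, hg⟩ : ∃ g, w = s + 2 * g + 4 := ⟨(w - s - 4) / 2, by omega⟩
      exact ⟨[(u + 1, u), (g + 3, g), (0, 0)], triple (by omega) (by push_cast; ring_nf; omega)⟩
    · obtain ⟨u, hu⟩ : ∃ u, 3 * s = w + 2 * u + 5 := ⟨(3 * s - w - 5) / 2, by omega⟩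
      obtain ⟨g, hg⟩ : ∃ g, w = s + 2 * g + 3 := ⟨(w - s - 3) / 2, by omega⟩
      exact ⟨[(u + 1, u), (g + 3, g), (1, 1)], triple (by omega) (by push_cast; ring_nf; omega)⟩
  · obtain ⟨u, hu⟩ : ∃ u, w = 2 * u + 3 := ⟨t - 1, by omega⟩
    obtain ⟨g, hg⟩ : ∃ g, s = u + g + 2 := ⟨s - u - 2, by omega⟩
    exact ⟨[(u + 2, u), (g, g), (0, 0)], triple (by omega) (by push_cast; ring_nf; omega)⟩

lemma exists_contentWitness_even_of_le {s w : ℕ} (hs : 16 ≤ s) (hw : w ≤ s) :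
    ∃ F, ContentWitness (2 * s) w F := by
  by_cases h0 : w = 0
  · obtain ⟨t, rfl⟩ : ∃ t, s = t + 1 := ⟨s - 1, by omega⟩
    exact ⟨[(t, t), (0, 0)], pair (by omega) (by push_cast [h0]; ring)⟩
  by_cases h1 : w = 1
  · obtain ⟨t, rfl⟩ : ∃ t, s = t + 4 := ⟨s - 4, by omega⟩
    exact ⟨[(t, t), (2, 2), (1, 0)], triple (by omega) (by push_cast [h1]; ring)⟩
  by_cases htop : w = s
  · obtain ⟨t, rfl⟩ : ∃ t, s = t + 1 := ⟨s - 1, by omega⟩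
    exact ⟨[(t + 1, t)], single (by omega) (by push_cast [htop]; ring)⟩
  by_cases hsmall : 2 * w + 2 ≤ s
  · obtain ⟨c, hc⟩ : ∃ c, s = w + c + 1 := ⟨s - w - 1, by omega⟩
    obtain ⟨v, rfl⟩ : ∃ v, w = v + 1 := ⟨w - 1, by omega⟩
    exact ⟨[(c, c), (v + 1, v), (0, 0)], triple (by omega) (by push_cast; ring)⟩
  by_cases hnext : w + 1 = s
  · by_cases h16 : s = 16
    · -- the witness of the general case needs `17 ≤ s`
      subst h16
      exact ⟨[(12, 10), (2, 4), (0, 1)], triple (by omega) (by omega)⟩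
    · obtain ⟨t, rfl⟩ : ∃ t, s = t + 10 := ⟨s - 10, by omega⟩
      exact ⟨[(t + 1, t), (7, 5), (1, 3)], triple (by omega) (by push_cast; ring_nf; omega)⟩
  rcases Nat.even_or_odd w with ⟨t, ht⟩ | ⟨t, ht⟩
  · obtain ⟨u, hu⟩ : ∃ u, w = 2 * u + 6 := ⟨t - 3, by omega⟩
    obtain ⟨g, hg⟩ : ∃ g, s = u + g + 4 := ⟨s - u - 4, by omega⟩
    exact ⟨[(g, g), (u + 3, u + 1), (1, 0)], triple (by omega) (by push_cast; ring_nf; omega)⟩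
  · obtain ⟨u, hu⟩ : ∃ u, w = 2 * u + 3 := ⟨t - 1, by omega⟩
    obtain ⟨g, hg⟩ : ∃ g, 2 * s = w + 2 * g + 1 := ⟨(2 * s - w - 1) / 2, by omega⟩
    exact ⟨[(g, g), (u + 2, u)], pair (by omega) (by push_cast; ring_nf; omega)⟩

lemma exists_contentWitness_even_of_lt {s w : ℕ} (hs : 16 ≤ s) (hsw : s < w) (hw : w ≤ 2 * s) :
    ∃ F, ContentWitness (2 * s) w F := by
  by_cases htop : w = 2 * s
  · obtain ⟨t, rfl⟩ : ∃ t, s = t + 3 := ⟨s - 3, by omega⟩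
    exact ⟨[(t + 2, t), (2, 0)], pair (by omega) (by push_cast [htop]; ring)⟩
  by_cases hmid : w = s + 1
  · obtain ⟨t, rfl⟩ : ∃ t, s = t + 8 := ⟨s - 8, by omega⟩
    exact ⟨[(t + 1, t), (6, 4), (0, 2)], triple (by omega) (by push_cast [hmid]; ring)⟩
  by_cases htop2 : w + 2 = 2 * s
  · obtain ⟨t, rfl⟩ : ∃ t, s = t + 7 := ⟨s - 7, by omega⟩
    exact ⟨[(t + 2, t), (4, 2), (2, 1)], triple (by omega) (by push_cast; ring_nf; omega)⟩
  by_cases htop4 : w + 4 = 2 * s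
  · obtain ⟨t, rfl⟩ : ∃ t, s = t + 11 := ⟨s - 11, by omega⟩
    exact ⟨[(t + 2, t), (6, 4), (4, 3)], triple (by omega) (by push_cast; ring_nf; omega)⟩
  rcases Nat.even_or_odd w with ⟨t, ht⟩ | ⟨t, ht⟩
  · obtain ⟨u, hu⟩ : ∃ u, w = 2 * u + 4 := ⟨t - 2, by omega⟩
    obtain ⟨g, hg⟩ : ∃ g, 2 * s = w + 2 * g + 2 := ⟨(2 * s - w - 2) / 2, by omega⟩
    exact ⟨[(u + 2, u), (g, g), (1, 0)], triple (by omega) (by push_cast; ring_nf; omega)⟩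
  · obtain ⟨u, hu⟩ : ∃ u, w = 2 * u + 3 := ⟨t - 1, by omega⟩
    obtain ⟨g, hg⟩ : ∃ g, 2 * s = w + 2 * g + 1 := ⟨(2 * s - w - 1) / 2, by omega⟩
    exact ⟨[(u + 2, u), (g, g)], pair (by omega) (by push_cast; ring_nf; omega)⟩

end Cover

lemma exists_contentWitness_of_le {r w : ℕ} (hr : 31 ≤ r) (hw : w ≤ r) :
    ∃ F, ContentWitness r w F := by
  obtain ⟨s, rfl | rfl⟩ : ∃ s, r = 2 * s + 1 ∨ r = 2 * s := ⟨r / 2, by omega⟩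
  · rcases le_or_gt w s with h | h
    · exact exists_contentWitness_odd_of_le (by omega) h
    · exact exists_contentWitness_odd_of_lt (by omega) h hw
  · rcases le_or_gt w s with h | h
    · exact exists_contentWitness_even_of_le (by omega) h
    · exact exists_contentWitness_even_of_lt (by omega) h hw

lemma exists_contentWitness_of_abs_le {r : ℕ} {w : ℤ} (hr : 31 ≤ r) (hw : |w| ≤ r) :
    ∃ F, ContentWitness r w F := by
  obtain ⟨hlo, hhi⟩ := abs_le.1 hw
  rcases le_total 0 w with h | h
  · lift w to ℕ using h
    exact exists_contentWitness_of_le hr (by omega)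
  · obtain ⟨v, hv⟩ : ∃ v : ℕ, (v : ℤ) = -w := ⟨(-w).toNat, by omega⟩
    obtain ⟨F, hF⟩ := exists_contentWitness_of_le hr (w := v) (by omega)
    exact ⟨_, by simpa [hv] using hF.swap⟩

lemma ContentWitness.exists_partition {r n₁ : ℕ} {w : ℤ} {F : List (ℕ × ℕ)}
    (hF : ContentWitness r w F) (hn₁ : r + 3 ≤ 2 * n₁) :
    ∃ L : List ℕ, IsPartitionOf (n₁ + r) L ∧ n₁ ∈ L ∧ (∀ x ∈ L, x ≤ n₁) ∧
      transLam L = (n₁.choose 2 : ℚ) - r + w := by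
  have hle : ∀ x ∈ ofFrobenius F, x ≤ n₁ := le_of_mem_ofFrobenius hF.isFrobenius fun p hp => by
    have := (hF.two_mul_le p hp).1
    omega
  obtain ⟨hsorted, hpos, hsum⟩ := isPartitionOf_ofFrobenius hF.isFrobenius
  have hlam := two_mul_transLam_ofFrobenius hF.isFrobenius
  rw [hF.sum_twiceHookContent] at hlam
  rw [hF.sum_hookLength] at hsum
  refine ⟨n₁ :: ofFrobenius F, ⟨List.pairwise_cons.2 ⟨hle, hsorted⟩, ?_, ?_⟩, List.mem_cons_self,
    List.forall_mem_cons.2 ⟨le_rfl, hle⟩, ?_⟩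
  · exact List.forall_mem_cons.2 ⟨by omega, hpos⟩
  · rw [List.sum_cons, hsum]
  · rw [transLam_cons, Nat.cast_choose_two, hsum]
    push_cast at hlam
    linarith

theorem segment_near_choose_n1_general (n n₁ : ℕ) (h31 : n₁ + 31 ≤ n)
    (h3 : n + 3 ≤ 3 * n₁) (m : ℤ)
    (hm1 : (n₁.choose 2 : ℤ) - 2 * ((n : ℤ) - (n₁ : ℤ)) ≤ m)
    (hm2 : m ≤ (n₁.choose 2 : ℤ)) :
    ∃ L : List ℕ, IsPartitionOf n L ∧ n₁ ∈ L ∧ (∀ x ∈ L, x ≤ n₁) ∧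
      transLam L = (m : ℚ) := by
  obtain ⟨r, rfl⟩ : ∃ r, n = n₁ + r := ⟨n - n₁, by omega⟩
  push_cast at hm1
  obtain ⟨F, hF⟩ := exists_contentWitness_of_abs_le (r := r) (w := m - n₁.choose 2 + r)
    (by omega) (abs_le.2 ⟨by linarith, by linarith⟩)
  obtain ⟨L, hL, hmem, hle, hlam⟩ := hF.exists_partition (n₁ := n₁) (by omega)
  exact ⟨L, hL, hmem, hle, by rw [hlam]; push_cast; ring⟩

theorem segment_near_choose_n1 (n n₁ : ℕ) (hn₁ : 0 < n₁) (h31 : n₁ + 31 ≤ n)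
    (h3 : n + 3 ≤ 3 * n₁) (m : ℤ)
    (hm1 : (n₁.choose 2 : ℤ) - 2 * ((n : ℤ) - (n₁ : ℤ)) ≤ m)
    (hm2 : m ≤ (n₁.choose 2 : ℤ)) :
    ∃ L : List ℕ, IsPartitionOf n L ∧ n₁ ∈ L ∧ (∀ x ∈ L, x ≤ n₁) ∧
      transLam L = (m : ℚ) :=
  segment_near_choose_n1_general n n₁ h31 h3 m hm1 hm2
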